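/- Let f(x) = ∑_{n ≥ 0} x^{2^n − 1} ∈ ℤ[[x]] and let g(x) ∈ ℤ[1/2][[x]] be the unique power series with constant term 1 satisfying g(x)² = f(x)·f(−x). Then the power series δg(x,y) = g(x+y)/(g(x)·g(y)) has all coefficients in ℤ. -/

import Mathlib

/-!
Since `f(-x) = 2 - f(x)`, we have `g² = f·(2 - f)`. Over `𝔽₂` squaring a series substitutes `x²`
for `x`, so `f = 1 + x f²`; hence `h = x f` satisfies `h + h² = x`, and `h(x + y) = h(x) + h(y)`
because `t ↦ t + t²` is injective on series without constant term. Over `ℤ` this gives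
`1/f(x) + 1/f(y) ≡ 1 + 1/f(x+y) (mod 2)`. Consequently `σ = δg · f(x) f(y) / f(x+y)` satisfies
`σ² = (2/f(x+y) - 1) / ((2/f(x) - 1)(2/f(y) - 1)) ≡ 1 (mod 4)`, and a series `√(1 + 4τ)` has
integer coefficients (they come from the Catalan numbers), so `σ` and then `δg` are integral.
-/

/-- `f(x) = ∑_{n ≥ 0} x^(2^n - 1)`, with rational coefficients. -/
noncomputable def fSeriesQ : PowerSeries ℚ := by
  classical
  exact PowerSeries.mk fun m => if ∃ n : ℕ, m + 1 = 2 ^ n then 1 else 0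

open MvPowerSeries

section IntCoeffSeries

variable {ι : Type*}

noncomputable abbrev intCoeffSeries (ι : Type*) : Subring (MvPowerSeries ι ℚ) :=
  (map (Int.castRingHom ℚ)).range

lemma inv_mem_intCoeffSeries {x : MvPowerSeries ι ℚ} (hx : x ∈ intCoeffSeries ι)
    (h1 : constantCoeff x = 1) : x⁻¹ ∈ intCoeffSeries ι := by
  obtain ⟨y, rfl⟩ := hx
  have hy : constantCoeff y = 1 := by simpa using h1
  refine ⟨y.invOfUnit 1, ?_⟩
  rw [eq_comm, MvPowerSeries.inv_eq_iff_mul_eq_one (by simp [h1]), ← map_mul,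
    mul_comm, mul_invOfUnit _ _ (by simp [hy]), map_one]

lemma exists_sq_eq_one_add_four_mul {t : MvPowerSeries ι ℤ} (ht : constantCoeff t = 0) :
    ∃ s : MvPowerSeries ι ℤ, constantCoeff s = 1 ∧ s ^ 2 = 1 + 4 * t := by
  -- `v = X c` at `X = -t`, with `c = 1 + X c²` the Catalan series, satisfies `v = -t + v²`
  have hsubst : PowerSeries.HasSubst (-t) := .of_constantCoeff_zero (by simp [ht])
  set c : PowerSeries ℤ := PowerSeries.map (Nat.castRingHom ℤ) PowerSeries.catalanSeries
  have hcat : c ^ 2 * PowerSeries.X + 1 = c := by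
    simpa [c] using congrArg (PowerSeries.map (Nat.castRingHom ℤ))
      PowerSeries.catalanSeries_sq_mul_X_add_one
  have hc : PowerSeries.X * c = PowerSeries.X + (PowerSeries.X * c) ^ 2 := by
    linear_combination (-PowerSeries.X : PowerSeries ℤ) * hcat
  set v := PowerSeries.substAlgHom hsubst (PowerSeries.X * c)
  have hv : v = -t + v ^ 2 := by
    have := congrArg (PowerSeries.substAlgHom hsubst) hc
    rwa [map_add, map_pow, PowerSeries.substAlgHom_X] at this
  have hv0 : constantCoeff v = 0 := by
    simp only [v, PowerSeries.coe_substAlgHom]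
    exact PowerSeries.constantCoeff_subst_eq_zero (by simp [ht]) _ (by simp)
  exact ⟨1 - 2 * v, by simp [hv0], by linear_combination (-4 : MvPowerSeries ι ℤ) * hv⟩

lemma eq_of_sq_eq_sq_of_constantCoeff_eq_one {R : Type*} [CommRing R] [NoZeroDivisors R]
    [NeZero (2 : R)] {x y : MvPowerSeries ι R} (h : x ^ 2 = y ^ 2)
    (hx : constantCoeff x = 1) (hy : constantCoeff y = 1) : x = y := by
  refine (sq_eq_sq_iff_eq_or_eq_neg.mp h).resolve_right fun hneg => NeZero.ne (2 : R) ?_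
  have := congrArg constantCoeff hneg
  rw [map_neg, hx, hy] at this
  linear_combination this

lemma mem_intCoeffSeries_of_sq_eq_one_add_four_mul {x τ : MvPowerSeries ι ℚ}
    (hτ : τ ∈ intCoeffSeries ι) (hx : x ^ 2 = 1 + 4 * τ) (h1 : constantCoeff x = 1) :
    x ∈ intCoeffSeries ι := by
  obtain ⟨t, rfl⟩ := hτ
  have ht : constantCoeff t = 0 := by
    have := congrArg constantCoeff hx
    simp only [map_pow, h1, map_add, map_one, map_mul, constantCoeff_map] at this
    simpa [map_ofNat constantCoeff 4] using this
  obtain ⟨s, hs1, hs⟩ := exists_sq_eq_one_add_four_mul ht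
  refine ⟨s, eq_of_sq_eq_sq_of_constantCoeff_eq_one ?_ (by simp [hs1]) h1⟩
  rw [← map_pow, hs, hx]
  simp [map_ofNat]

lemma mul_inv_cancel_of_constantCoeff_eq_one {x : MvPowerSeries ι ℚ}
    (h : constantCoeff x = 1) : x * x⁻¹ = 1 :=
  MvPowerSeries.mul_inv_cancel x (by simp [h])

lemma mem_intCoeffSeries_of_mul_eq_of_sq_eq {A B C W Gx Gy Gxy D : MvPowerSeries ι ℚ}
    (hA : A ∈ intCoeffSeries ι) (hB : B ∈ intCoeffSeries ι) (hC : C ∈ intCoeffSeries ι)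
    (hW : W ∈ intCoeffSeries ι) (hA1 : constantCoeff A = 1) (hB1 : constantCoeff B = 1)
    (hC1 : constantCoeff C = 1) (hABC : A * B * (1 + C) - C * (A + B) = 2 * W)
    (hGx : Gx ^ 2 = A * (2 - A)) (hGy : Gy ^ 2 = B * (2 - B)) (hGxy : Gxy ^ 2 = C * (2 - C))
    (hD : D * (Gx * Gy) = Gxy) (hD1 : constantCoeff D = 1) : D ∈ intCoeffSeries ι := by
  have hDsq : D ^ 2 * (A * (2 - A)) * (B * (2 - B)) = C * (2 - C) := by
    linear_combination (-(D ^ 2 * (B * (2 - B)))) * hGx - D ^ 2 * Gx ^ 2 * hGy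
      + (D * Gx * Gy + Gxy) * hD + hGxy
  have hAinv := mul_inv_cancel_of_constantCoeff_eq_one hA1
  have hBinv := mul_inv_cancel_of_constantCoeff_eq_one hB1
  have hCinv := mul_inv_cancel_of_constantCoeff_eq_one hC1
  set M := (2 - A) * (2 - B) * C
  set T := W - C * (A - 1) * (B - 1)
  set σ := D * A * B * C⁻¹
  have hM : M ∈ intCoeffSeries ι :=
    mul_mem (mul_mem (sub_mem (ofNat_mem _ 2) hA) (sub_mem (ofNat_mem _ 2) hB)) hC
  have hM1 : constantCoeff M = 1 := by simp [M, map_ofNat, hA1, hB1, hC1]; norm_num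
  -- the mod 2 relation `hABC` makes `σ²` congruent to `1` mod 4
  have hσM : σ ^ 2 * M = M + 4 * T := by
    linear_combination (A * B * C⁻¹ ^ 2 * C) * hDsq
      + A * B * (2 - C) * (C * C⁻¹ + 1) * hCinv + 2 * hABC
  have hσ : σ ^ 2 = 1 + 4 * (T * M⁻¹) := by
    linear_combination M⁻¹ * hσM + (1 - σ ^ 2) * mul_inv_cancel_of_constantCoeff_eq_one hM1
  have hT : T ∈ intCoeffSeries ι :=
    sub_mem hW (mul_mem (mul_mem hC (sub_mem hA (one_mem _))) (sub_mem hB (one_mem _)))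
  have hσS : σ ∈ intCoeffSeries ι :=
    mem_intCoeffSeries_of_sq_eq_one_add_four_mul (mul_mem hT (inv_mem_intCoeffSeries hM hM1)) hσ
      (by simp [σ, hD1, hA1, hB1, hC1])
  have hDσ : D = σ * C * A⁻¹ * B⁻¹ := by
    linear_combination (-D) * hCinv - D * C * C⁻¹ * hBinv - D * C * C⁻¹ * B * B⁻¹ * hAinv
  rw [hDσ]
  exact mul_mem (mul_mem (mul_mem hσS hC) (inv_mem_intCoeffSeries hA hA1))
    (inv_mem_intCoeffSeries hB hB1)

end IntCoeffSeries

-- `fSeriesQ` is definitionally `fSeries ℚ`.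
open Classical in
noncomputable def fSeries (R : Type*) [Semiring R] : PowerSeries R :=
  PowerSeries.mk fun m => if ∃ n : ℕ, m + 1 = 2 ^ n then 1 else 0

section fSeries

variable {R S : Type*} [CommRing R] [CommRing S]

open Classical in
lemma coeff_fSeries (m : ℕ) :
    PowerSeries.coeff m (fSeries R) = if ∃ n : ℕ, m + 1 = 2 ^ n then 1 else 0 :=
  PowerSeries.coeff_mk _ _

lemma map_fSeries (h : R →+* S) : PowerSeries.map h (fSeries R) = fSeries S := by
  ext m
  simp [coeff_fSeries, apply_ite h]

lemma not_exists_two_pow_eq_two_mul_add_three (k : ℕ) :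
    ¬∃ n : ℕ, 2 * k + 2 + 1 = 2 ^ n := by
  rintro ⟨_ | n, hn⟩
  · omega
  · rw [pow_succ] at hn; omega

lemma exists_two_pow_eq_two_mul_add_two_iff (k : ℕ) :
    (∃ n : ℕ, 2 * k + 1 + 1 = 2 ^ n) ↔ ∃ n : ℕ, k + 1 = 2 ^ n := by
  constructor
  · rintro ⟨_ | n, hn⟩
    · omega
    · exact ⟨n, by rw [pow_succ] at hn; omega⟩
  · rintro ⟨n, hn⟩
    exact ⟨n + 1, by rw [pow_succ]; omega⟩

lemma constantCoeff_fSeries : PowerSeries.constantCoeff (fSeries R) = 1 := by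
  simp [← PowerSeries.coeff_zero_eq_constantCoeff_apply, coeff_fSeries,
    show ∃ n : ℕ, 1 = 2 ^ n from ⟨0, rfl⟩]

lemma rescale_neg_one_fSeries : PowerSeries.rescale (-1 : R) (fSeries R) = 2 - fSeries R := by
  ext m
  rw [PowerSeries.coeff_rescale, map_sub, ← map_ofNat (PowerSeries.C (R := R)) 2,
    PowerSeries.coeff_C]
  obtain ⟨k, rfl | rfl⟩ := Nat.even_or_odd' m
  · rcases k with _ | k
    · simp [constantCoeff_fSeries]; norm_num
    · simp [coeff_fSeries, mul_add, not_exists_two_pow_eq_two_mul_add_three]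
  · by_cases h : ∃ n : ℕ, 2 * k + 1 + 1 = 2 ^ n <;> simp [coeff_fSeries, pow_succ, pow_mul, h]

lemma fSeries_zmod_two : fSeries (ZMod 2) = 1 + PowerSeries.X * fSeries (ZMod 2) ^ 2 := by
  have hsq : fSeries (ZMod 2) ^ 2 = PowerSeries.expand 2 two_ne_zero (fSeries (ZMod 2)) := by
    rw [← MvPowerSeries.map_frobenius_expand 2 two_ne_zero, ZMod.frobenius_zmod, map_id]
    rfl
  rw [hsq]
  ext m
  rcases m with _ | m
  · simp [constantCoeff_fSeries]
  · rw [map_add, PowerSeries.coeff_succ_X_mul, PowerSeries.coeff_expand, PowerSeries.coeff_one,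
      if_neg m.succ_ne_zero, zero_add]
    obtain ⟨k, rfl | rfl⟩ := Nat.even_or_odd' m
    · simp only [coeff_fSeries, dvd_mul_right, if_true, Nat.mul_div_cancel_left k two_pos]
      congr 1
      exact propext (exists_two_pow_eq_two_mul_add_two_iff k)
    · simp [coeff_fSeries, not_exists_two_pow_eq_two_mul_add_three]

end fSeries

section fSeriesAt

variable {ι R S : Type*} [CommRing R] [CommRing S]

noncomputable def fSeriesAt (s : MvPowerSeries ι R) : MvPowerSeries ι R :=
  (fSeries R).subst s

lemma map_fSeriesAt (h : R →+* S) {s : MvPowerSeries ι R} (hs : constantCoeff s = 0) :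
    map h (fSeriesAt s) = fSeriesAt (map h s) := by
  rw [fSeriesAt, PowerSeries.map_subst (.of_constantCoeff_zero hs), map_fSeries, fSeriesAt]

lemma constantCoeff_subst_of_constantCoeff_eq_zero {s : MvPowerSeries ι R}
    (hs : constantCoeff s = 0) (f : PowerSeries R) :
    constantCoeff (f.subst s) = PowerSeries.constantCoeff f := by
  have h := PowerSeries.constantCoeff_subst_eq_zero hs
    (f - PowerSeries.C (PowerSeries.constantCoeff f)) (by simp)
  rwa [PowerSeries.subst_sub (.of_constantCoeff_zero hs), PowerSeries.subst_C, map_sub,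
    constantCoeff_C, sub_eq_zero] at h

lemma constantCoeff_fSeriesAt {s : MvPowerSeries ι R} (hs : constantCoeff s = 0) :
    constantCoeff (fSeriesAt s) = 1 := by
  rw [fSeriesAt, constantCoeff_subst_of_constantCoeff_eq_zero hs, constantCoeff_fSeries]

lemma sq_subst_eq_fSeriesAt_mul {g : PowerSeries R}
    (hg : g ^ 2 = fSeries R * PowerSeries.rescale (-1) (fSeries R))
    {s : MvPowerSeries ι R} (hs : constantCoeff s = 0) :
    g.subst s ^ 2 = fSeriesAt s * (2 - fSeriesAt s) := by
  rw [rescale_neg_one_fSeries] at hg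
  have := congrArg (PowerSeries.substAlgHom (.of_constantCoeff_zero hs)) hg
  rwa [map_pow, map_mul, map_sub, map_ofNat, PowerSeries.coe_substAlgHom] at this

lemma eq_of_add_sq_eq_add_sq {P Q : MvPowerSeries ι R} (hP : constantCoeff P = 0)
    (hQ : constantCoeff Q = 0) (h : P + P ^ 2 = Q + Q ^ 2) : P = Q := by
  have hunit : IsUnit (1 + P + Q) := by
    simp [MvPowerSeries.isUnit_iff_constantCoeff, hP, hQ]
  rw [← sub_eq_zero, ← hunit.mul_left_eq_zero]
  linear_combination h

lemma fSeriesAt_zmod_two {s : MvPowerSeries ι (ZMod 2)} (hs : constantCoeff s = 0) :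
    fSeriesAt s = 1 + s * fSeriesAt s ^ 2 := by
  have := congrArg (PowerSeries.substAlgHom (.of_constantCoeff_zero hs)) fSeries_zmod_two
  rwa [map_add, map_one, map_mul, map_pow, PowerSeries.substAlgHom_X,
    PowerSeries.coe_substAlgHom] at this

lemma two_eq_zero_zmod_two : (2 : MvPowerSeries ι (ZMod 2)) = 0 := by
  rw [← map_ofNat (C (σ := ι)), show (OfNat.ofNat 2 : ZMod 2) = 0 from rfl, map_zero]

lemma fSeriesAt_add_zmod_two {s t : MvPowerSeries ι (ZMod 2)} (hs : constantCoeff s = 0)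
    (ht : constantCoeff t = 0) :
    fSeriesAt s * fSeriesAt t * (1 + fSeriesAt (s + t))
      = fSeriesAt (s + t) * (fSeriesAt s + fSeriesAt t) := by
  have hst : constantCoeff (s + t) = 0 := by simp [hs, ht]
  have h2 := two_eq_zero_zmod_two (ι := ι)
  have ha := fSeriesAt_zmod_two hs
  have hb := fSeriesAt_zmod_two ht
  have hc := fSeriesAt_zmod_two hst
  -- `u ↦ u f(u)` is additive: both sides of `hadd` are roots of `P + P² = s + t`
  have hadd : (s + t) * fSeriesAt (s + t) = s * fSeriesAt s + t * fSeriesAt t := by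
    refine eq_of_add_sq_eq_add_sq (by simp [hst]) (by simp [hs, ht]) ?_
    linear_combination (s + t) * hc - s * ha - t * hb + ((s + t) ^ 2 * fSeriesAt (s + t) ^ 2
      - s ^ 2 * fSeriesAt s ^ 2 - t ^ 2 * fSeriesAt t ^ 2 - s * fSeriesAt s * t * fSeriesAt t) * h2
  linear_combination (-(fSeriesAt s * fSeriesAt t)) * hc
    - fSeriesAt s * fSeriesAt t * fSeriesAt (s + t) * hadd
    + fSeriesAt s * fSeriesAt (s + t) * hb + fSeriesAt t * fSeriesAt (s + t) * ha

lemma exists_eq_natCast_mul_of_map_zmod_eq_zero (n : ℕ) {x : MvPowerSeries ι ℤ}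
    (hx : map (Int.castRingHom (ZMod n)) x = 0) : ∃ y, x = n * y := by
  have hdvd (d : ι →₀ ℕ) : (n : ℤ) ∣ coeff d x := by
    rw [← ZMod.intCast_zmod_eq_zero_iff_dvd]
    simpa using congrArg (coeff d) hx
  choose y hy using hdvd
  refine ⟨show MvPowerSeries ι ℤ from y, ext fun d => ?_⟩
  rw [← map_natCast (C (σ := ι)), coeff_C_mul]
  exact hy d

lemma exists_fSeriesAt_add_int {s t : MvPowerSeries ι ℤ} (hs : constantCoeff s = 0)
    (ht : constantCoeff t = 0) : ∃ w, fSeriesAt s * fSeriesAt t * (1 + fSeriesAt (s + t))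
      - fSeriesAt (s + t) * (fSeriesAt s + fSeriesAt t) = 2 * w := by
  refine exists_eq_natCast_mul_of_map_zmod_eq_zero 2 ?_
  have hst : constantCoeff (s + t) = 0 := by simp [hs, ht]
  rw [map_sub, sub_eq_zero]
  simp only [map_mul, map_add, map_one, map_fSeriesAt _ hs, map_fSeriesAt _ ht,
    map_fSeriesAt _ hst]
  exact fSeriesAt_add_zmod_two (by simp [hs]) (by simp [ht])

lemma fSeriesAt_map_mem_intCoeffSeries {s : MvPowerSeries ι ℤ} (hs : constantCoeff s = 0) :
    fSeriesAt (map (Int.castRingHom ℚ) s) ∈ intCoeffSeries ι :=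
  ⟨fSeriesAt s, map_fSeriesAt _ hs⟩

lemma exists_fSeriesAt_X_add_X_rat (i j : ι) :
    ∃ W ∈ intCoeffSeries ι, fSeriesAt (X i) * fSeriesAt (X j) * (1 + fSeriesAt (X i + X j))
      - fSeriesAt (X i + X j) * (fSeriesAt (X i) + fSeriesAt (X j)) = 2 * W := by
  have hi : constantCoeff (X i : MvPowerSeries ι ℤ) = 0 := constantCoeff_X i
  have hj : constantCoeff (X j : MvPowerSeries ι ℤ) = 0 := constantCoeff_X j
  have hij : constantCoeff (X i + X j : MvPowerSeries ι ℤ) = 0 := by simp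
  obtain ⟨w, hw⟩ := exists_fSeriesAt_add_int hi hj
  refine ⟨map (Int.castRingHom ℚ) w, ⟨w, rfl⟩, ?_⟩
  have := congrArg (map (Int.castRingHom ℚ)) hw
  simpa [map_fSeriesAt _ hi, map_fSeriesAt _ hj, map_fSeriesAt _ hij, map_ofNat] using this

end fSeriesAt

section FinTwo

variable {R : Type*} [CommRing R]

lemma coeff_subst_X_zero (f : PowerSeries R) (d : Fin 2 →₀ ℕ) :
    coeff d (f.subst (X 0 : MvPowerSeries (Fin 2) R))
      = if d 1 = 0 then PowerSeries.coeff (d 0) f else 0 := by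
  simp [PowerSeries.coeff_subst_single, Finsupp.ext_iff, Fin.forall_fin_two]

lemma coeff_subst_X_one (f : PowerSeries R) (d : Fin 2 →₀ ℕ) :
    coeff d (f.subst (X 1 : MvPowerSeries (Fin 2) R))
      = if d 0 = 0 then PowerSeries.coeff (d 1) f else 0 := by
  simp [PowerSeries.coeff_subst_single, Finsupp.ext_iff, Fin.forall_fin_two, eq_comm]

lemma coeff_X_zero_add_X_one_pow (d : Fin 2 →₀ ℕ) (n : ℕ) :
    coeff d ((X 0 + X 1 : MvPowerSeries (Fin 2) R) ^ n)
      = if d 0 + d 1 = n then (n.choose (d 0) : R) else 0 := by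
  rw [← MvPolynomial.coe_X, ← MvPolynomial.coe_X, ← MvPolynomial.coe_add,
    ← MvPolynomial.coe_pow, MvPolynomial.coeff_coe, MvPolynomial.coeff_add_pow]
  simp

lemma coeff_subst_X_zero_add_X_one (f : PowerSeries R) (d : Fin 2 →₀ ℕ) :
    coeff d (f.subst (X 0 + X 1 : MvPowerSeries (Fin 2) R))
      = ((d 0 + d 1).choose (d 0) : R) * PowerSeries.coeff (d 0 + d 1) f := by
  rw [PowerSeries.coeff_subst (.of_constantCoeff_zero (by simp)),
    finsum_eq_single _ (d 0 + d 1) fun n hn => by simp [coeff_X_zero_add_X_one_pow, Ne.symm hn]]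
  simp [coeff_X_zero_add_X_one_pow, mul_comm]

end FinTwo

/-- Let `g` be the unique power series with constant term `1` (with
coefficients in `ℤ[1/2] ⊆ ℚ`) satisfying `g(x)² = f(x)·f(-x)`.  Then
`δg(x,y) = g(x+y)/(g(x)g(y))` has all coefficients in `ℤ`.  Here `Gx`, `Gy`, `Gxy` are
`g(x)`, `g(y)` and `g(x+y)` as two-variable power series (`g(x+y)` expanded by the binomial
theorem), and `D = δg(x,y)` is characterized by `D·(g(x)g(y)) = g(x+y)`. -/
theorem statement12 (g : PowerSeries ℚ)
    (hg1 : PowerSeries.constantCoeff g = 1)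
    (hg2 : g ^ 2 = fSeriesQ * PowerSeries.rescale (-1 : ℚ) fSeriesQ)
    (Gx Gy Gxy : MvPowerSeries (Fin 2) ℚ)
    (hGx : ∀ d : Fin 2 →₀ ℕ,
      MvPowerSeries.coeff d Gx = if d 1 = 0 then PowerSeries.coeff (d 0) g else 0)
    (hGy : ∀ d : Fin 2 →₀ ℕ,
      MvPowerSeries.coeff d Gy = if d 0 = 0 then PowerSeries.coeff (d 1) g else 0)
    (hGxy : ∀ d : Fin 2 →₀ ℕ,
      MvPowerSeries.coeff d Gxy
        = ((d 0 + d 1).choose (d 0) : ℚ) * PowerSeries.coeff (d 0 + d 1) g)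
    (D : MvPowerSeries (Fin 2) ℚ)
    (hD : D * (Gx * Gy) = Gxy) :
    ∀ d : Fin 2 →₀ ℕ, ∃ n : ℤ, MvPowerSeries.coeff d D = (n : ℚ) := by
  obtain rfl : Gx = g.subst (X 0) := ext fun d => by rw [hGx, coeff_subst_X_zero]
  obtain rfl : Gy = g.subst (X 1) := ext fun d => by rw [hGy, coeff_subst_X_one]
  obtain rfl : Gxy = g.subst (X 0 + X 1) :=
    ext fun d => by rw [hGxy, coeff_subst_X_zero_add_X_one]
  have h0 : constantCoeff (X 0 : MvPowerSeries (Fin 2) ℚ) = 0 := constantCoeff_X 0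
  have h1 : constantCoeff (X 1 : MvPowerSeries (Fin 2) ℚ) = 0 := constantCoeff_X 1
  have h01 : constantCoeff (X 0 + X 1 : MvPowerSeries (Fin 2) ℚ) = 0 := by simp
  have hD1 : constantCoeff D = 1 := by
    simpa [constantCoeff_subst_of_constantCoeff_eq_zero, hg1] using congrArg constantCoeff hD
  obtain ⟨W, hW, hrel⟩ := exists_fSeriesAt_X_add_X_rat (0 : Fin 2) 1
  have hA := fSeriesAt_map_mem_intCoeffSeries (constantCoeff_X (R := ℤ) (0 : Fin 2))
  have hB := fSeriesAt_map_mem_intCoeffSeries (constantCoeff_X (R := ℤ) (1 : Fin 2))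
  have hC := fSeriesAt_map_mem_intCoeffSeries
    (show constantCoeff (X 0 + X 1 : MvPowerSeries (Fin 2) ℤ) = 0 by simp)
  simp only [map_add, map_X] at hA hB hC
  obtain ⟨E, rfl⟩ := mem_intCoeffSeries_of_mul_eq_of_sq_eq hA hB hC hW
    (constantCoeff_fSeriesAt h0) (constantCoeff_fSeriesAt h1) (constantCoeff_fSeriesAt h01) hrel (sq_subst_eq_fSeriesAt_mul hg2 h0) (sq_subst_eq_fSeriesAt_mul hg2 h1)
    (sq_subst_eq_fSeriesAt_mul hg2 h01) hD hD1
  exact fun d => ⟨coeff d E, by simp⟩
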